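/- Let C_1, ..., C_N, C_test be exchangeable real-valued random variables. Let C_(1) ≤ ... ≤ C_N denote the order statistics of C_1,...,C_N, and let k satisfy k ≥ ⌈(N+1)(1-α)⌉ for some α ∈ (0,1). Then Pr(C_test > C_(k)) ≤ α. -/

import Mathlib

open MeasureTheory

/-- The `i`-th order statistic (0-based) of a finite tuple of reals. -/
noncomputable def orderStat {n : ℕ} (f : Fin n → ℝ) (i : Fin n) : ℝ :=
  f (Tuple.sort f i)

/-! Let `A_j` be the event that at least `k` of the `N + 1` scores lie strictly below `C_j`, so
that the target event is `A_test`. Exchangeability gives every `A_j` the same probability, while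
pointwise at most `N + 1 - k` indices can have `k` scores strictly below them. Hence
`(N + 1) Pr(A_test) = ∑ⱼ Pr(A_j) ≤ N + 1 - k ≤ (N + 1) α`. -/

open Finset
open scoped ENNReal

section Rank

variable {ι α : Type*} [Fintype ι] [LinearOrder α]

def strictRank (v : ι → α) (j : ι) : ℕ := #{i | v i < v j}

lemma card_filter_comp_perm (σ : Equiv.Perm ι) (p : ι → Prop) [DecidablePred p] :
    #{i | p (σ i)} = #{i | p i} := by
  simp only [card_filter]
  exact Equiv.sum_comp σ fun i => if p i then 1 else 0

lemma strictRank_comp_perm (v : ι → α) (σ : Equiv.Perm ι) (j : ι) :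
    strictRank (v ∘ σ) j = strictRank v (σ j) :=
  card_filter_comp_perm σ (v · < v (σ j))

/-- Minimality of `v j₀` over the high-rank indices makes them disjoint from the `k` indices below
`v j₀`. -/
lemma card_le_strictRank_le (v : ι → α) (k : ℕ) :
    #{j | k ≤ strictRank v j} ≤ Fintype.card ι - k := by
  classical
  set S : Finset ι := {j | k ≤ strictRank v j}
  rcases S.eq_empty_or_nonempty with hS | hS
  · simp [hS]
  obtain ⟨j₀, hj₀S, hj₀min⟩ := S.exists_min_image v hS
  have hdisj : Disjoint S ({i | v i < v j₀} : Finset ι) :=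
    disjoint_left.mpr fun i hiS hi => (hj₀min i hiS).not_gt (mem_filter.mp hi).2
  have hk : k ≤ strictRank v j₀ := (mem_filter.mp hj₀S).2
  have := card_union_of_disjoint hdisj ▸ card_le_univ (S ∪ ({i | v i < v j₀} : Finset ι))
  unfold strictRank at hk
  omega

lemma strictRank_last {n : ℕ} (v : Fin (n + 1) → α) :
    strictRank v (Fin.last n) = #{i : Fin n | v i.castSucc < v (Fin.last n)} := by
  simp only [strictRank, card_filter, Fin.sum_univ_castSucc, lt_self_iff_false, if_false,
    add_zero]

end Rank

lemma orderStat_lt_iff {n : ℕ} (f : Fin n → ℝ) (i : Fin n) (t : ℝ) :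
    orderStat f i < t ↔ (i : ℕ) < #{j | f j < t} := by
  rw [← card_filter_comp_perm (Tuple.sort f) (f · < t)]
  exact (Tuple.lt_card_lt_iff_apply_lt_of_monotone (Tuple.monotone_sort f)).symm

lemma measurable_strictRank {ι : Type*} [Fintype ι] (j : ι) :
    Measurable fun v : ι → ℝ => strictRank v j := by
  simp only [strictRank, card_filter]
  exact Finset.measurable_sum _ fun i _ => Measurable.ite
    (measurableSet_lt (measurable_pi_apply i) (measurable_pi_apply j))
    measurable_const measurable_const

section Exchangeable

variable {Ω ι : Type*} [MeasurableSpace Ω] {μ : Measure Ω} [Fintype ι] {X : ι → Ω → ℝ}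

lemma measurableSet_le_strictRank (hX : ∀ i, Measurable (X i)) (k : ℕ) (j : ι) :
    MeasurableSet {ω | k ≤ strictRank (X · ω) j} :=
  (measurable_strictRank j).comp (measurable_pi_lambda _ hX) measurableSet_Ici

lemma measure_le_strictRank_eq_of_exchangeable [DecidableEq ι] (hX : ∀ i, Measurable (X i))
    (hexch : ∀ σ : Equiv.Perm ι,
      Measure.map (fun ω i => X (σ i) ω) μ = Measure.map (fun ω i => X i ω) μ)
    (k : ℕ) (j j' : ι) :
    μ {ω | k ≤ strictRank (X · ω) j} = μ {ω | k ≤ strictRank (X · ω) j'} := by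
  set B := {v : ι → ℝ | k ≤ strictRank v j'}
  have hB : MeasurableSet B := measurable_strictRank j' measurableSet_Ici
  have hXσ : Measurable fun ω i => X (Equiv.swap j j' i) ω :=
    measurable_pi_lambda _ fun i => hX _
  calc μ {ω | k ≤ strictRank (X · ω) j}
      = μ ((fun ω i => X (Equiv.swap j j' i) ω) ⁻¹' B) := by
        refine congrArg μ (Set.ext fun ω => ?_)
        change k ≤ strictRank (X · ω) j ↔ k ≤ strictRank ((X · ω) ∘ Equiv.swap j j') j'
        rw [strictRank_comp_perm, Equiv.swap_apply_right]
    _ = μ ((fun ω i => X i ω) ⁻¹' B) := by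
        rw [← Measure.map_apply hXσ hB, hexch, Measure.map_apply (measurable_pi_lambda _ hX) hB]

lemma sum_measure_le_strictRank_le (hX : ∀ i, Measurable (X i)) (k : ℕ) :
    ∑ j, μ {ω | k ≤ strictRank (X · ω) j} ≤ (Fintype.card ι - k : ℕ) * μ Set.univ := by
  classical
  calc ∑ j, μ {ω | k ≤ strictRank (X · ω) j}
      = ∫⁻ ω, ∑ j, {ω | k ≤ strictRank (X · ω) j}.indicator 1 ω ∂μ := by
        rw [lintegral_finsetSum _ fun j _ =>
          measurable_one.indicator (measurableSet_le_strictRank hX k j)]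
        simp only [lintegral_indicator_one (measurableSet_le_strictRank hX k _)]
    _ ≤ ∫⁻ _, ((Fintype.card ι - k : ℕ) : ℝ≥0∞) ∂μ := by
        refine lintegral_mono fun ω => ?_
        simp only [Set.indicator_apply, Set.mem_ofPred_eq, Pi.one_apply, ← natCast_card_filter]
        exact_mod_cast card_le_strictRank_le (X · ω) k
    _ = _ := lintegral_const _

end Exchangeable

/-- Conformal quantile lemma: for exchangeable `C_1, …, C_N, C_test`, if
`k ≥ ⌈(N+1)(1-α)⌉` then `Pr(C_test > C_(k)) ≤ α`. -/
theorem stmt0 {Ω : Type*} [MeasurableSpace Ω] (μ : Measure Ω) [IsProbabilityMeasure μ]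
    (N : ℕ) (C : Fin (N + 1) → Ω → ℝ)
    (hmeas : ∀ i, Measurable (C i))
    (hexch : ∀ σ : Equiv.Perm (Fin (N + 1)),
      Measure.map (fun ω i => C (σ i) ω) μ = Measure.map (fun ω i => C i ω) μ)
    (α : ℝ)
    (k : ℕ) (hk1 : 1 ≤ k) (hkN : k ≤ N)
    (hk : ⌈((N : ℝ) + 1) * (1 - α)⌉ ≤ (k : ℤ)) :
    μ {ω | orderStat (fun i : Fin N => C i.castSucc ω) ⟨k - 1, by omega⟩
        < C (Fin.last N) ω} ≤ ENNReal.ofReal α := by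
  set A := {ω | k ≤ strictRank (C · ω) (Fin.last N)}
  have hevent : {ω | orderStat (fun i : Fin N => C i.castSucc ω) ⟨k - 1, by omega⟩
      < C (Fin.last N) ω} = A := by
    ext ω
    simp only [Set.mem_ofPred_eq, orderStat_lt_iff, strictRank_last, A]
    omega
  have hsum : ((N + 1 : ℕ) : ℝ≥0∞) * μ A ≤ (N + 1 - k : ℕ) := by
    simpa [measure_le_strictRank_eq_of_exchangeable hmeas hexch k _ (Fin.last N)] using
      sum_measure_le_strictRank_le hmeas k (μ := μ)
  have hcount : ((N + 1 - k : ℕ) : ℝ) ≤ (N + 1 : ℕ) * α := by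
    have : ((N : ℝ) + 1) * (1 - α) ≤ k := (Int.le_ceil _).trans (by exact_mod_cast hk)
    push_cast [Nat.cast_sub (by omega : k ≤ N + 1)]
    linarith
  rw [hevent]
  refine (ENNReal.mul_le_mul_iff_right (by positivity) (ENNReal.natCast_ne_top _)).mp
    (hsum.trans ?_)
  rw [← ENNReal.ofReal_natCast, ← ENNReal.ofReal_natCast (N + 1),
    ← ENNReal.ofReal_mul (by positivity)]
  exact ENNReal.ofReal_le_ofReal hcount
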